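/- Let A, A* be a Leonard pair in Mat_{d+1}(K) with A lower bidiagonal and A* upper bidiagonal. Then A_{i,i-1} ≠ 0 and A*_{i-1,i} ≠ 0 for 1 ≤ i ≤ d, the diagonal entries A_{00},...,A_{dd} form an eigenvalue sequence for A,A*, and the diagonal entries A*_{00},...,A*_{dd} form a dual eigenvalue sequence for A,A*. -/

import Mathlib

open Polynomial Matrix Finset

variable {K : Type*} [Field K]

/-- The primitive idempotent of `A` associated with eigenvalue `θ i`:
`E i = ∏_{j ≠ i} (A - θ j • 1) / (θ i - θ j)`. -/
noncomputable def primIdem {d : ℕ} (A : Matrix (Fin (d + 1)) (Fin (d + 1)) K)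
    (θ : Fin (d + 1) → K) (i : Fin (d + 1)) : Matrix (Fin (d + 1)) (Fin (d + 1)) K :=
  Polynomial.aeval A
    (∏ j ∈ Finset.univ.erase i,
      (Polynomial.C (θ i - θ j)⁻¹ * (Polynomial.X - Polynomial.C (θ j))))

/-- `A` is multiplicity-free with (distinct) eigenvalues `θ 0, …, θ d`. -/
def MultFreeWith {d : ℕ} (A : Matrix (Fin (d + 1)) (Fin (d + 1)) K)
    (θ : Fin (d + 1) → K) : Prop :=
  Function.Injective θ ∧ A.charpoly = ∏ i, (Polynomial.X - Polynomial.C (θ i))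

/-- `θ` is an eigenvalue sequence for the (ordered) pair `A, B`: the corresponding
ordering of the primitive idempotents of `A` is an idempotent sequence for `A, B`. -/
def IsEigenvalueSeq {d : ℕ} (A B : Matrix (Fin (d + 1)) (Fin (d + 1)) K)
    (θ : Fin (d + 1) → K) : Prop :=
  MultFreeWith A θ ∧
    ∀ i j : Fin (d + 1),
      (1 < |((i : ℕ) : ℤ) - ((j : ℕ) : ℤ)| → primIdem A θ i * B * primIdem A θ j = 0) ∧
      (|((i : ℕ) : ℤ) - ((j : ℕ) : ℤ)| = 1 → primIdem A θ i * B * primIdem A θ j ≠ 0)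

/-- `A, B` is a Leonard pair in `Mat_{d+1}(K)`. -/
def IsLeonardPair {d : ℕ} (A B : Matrix (Fin (d + 1)) (Fin (d + 1)) K) : Prop :=
  (∃ θ, IsEigenvalueSeq A B θ) ∧ (∃ θs, IsEigenvalueSeq B A θs)

/-- Every nonzero entry lies on the diagonal or the subdiagonal. -/
def LowerBidiagonal {K : Type*} [Field K] {d : ℕ}
    (A : Matrix (Fin (d + 1)) (Fin (d + 1)) K) : Prop :=
  ∀ i j : Fin (d + 1), (i : ℕ) ≠ (j : ℕ) → (i : ℕ) ≠ (j : ℕ) + 1 → A i j = 0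

/-- Every nonzero entry lies on the diagonal or the superdiagonal. -/
def UpperBidiagonal {K : Type*} [Field K] {d : ℕ}
    (A : Matrix (Fin (d + 1)) (Fin (d + 1)) K) : Prop :=
  ∀ i j : Fin (d + 1), (i : ℕ) ≠ (j : ℕ) → (j : ℕ) ≠ (i : ℕ) + 1 → A i j = 0

/-- Every nonzero entry lies on the diagonal, subdiagonal, or superdiagonal. -/
def Tridiagonal {K : Type*} [Field K] {d : ℕ}
    (A : Matrix (Fin (d + 1)) (Fin (d + 1)) K) : Prop :=
  ∀ i j : Fin (d + 1), 1 < |((i : ℕ) : ℤ) - ((j : ℕ) : ℤ)| → A i j = 0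

section Chunk1
variable {d : ℕ}

lemma LowerBidiagonal.t {A : Matrix (Fin (d+1)) (Fin (d+1)) K} (h : LowerBidiagonal A) :
    UpperBidiagonal Aᵀ := fun i j h1 h2 => h j i (fun e => h1 e.symm) h2

lemma UpperBidiagonal.t {A : Matrix (Fin (d+1)) (Fin (d+1)) K} (h : UpperBidiagonal A) :
    LowerBidiagonal Aᵀ := fun i j h1 h2 => h j i (fun e => h1 e.symm) h2

lemma charpoly_lowerBidiagonal {A : Matrix (Fin (d+1)) (Fin (d+1)) K}
    (hA : LowerBidiagonal A) : A.charpoly = ∏ i, (X - C (A i i)) := by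
  have hbt : A.BlockTriangular OrderDual.toDual := by
    intro i j hij
    have hij' : (i:ℕ) < (j:ℕ) := hij
    exact hA i j (by omega) (by omega)
  rw [Matrix.charpoly, Matrix.det_of_lowerTriangular _ hbt.charmatrix]
  exact Finset.prod_congr rfl fun i _ => charmatrix_apply_eq A i

lemma charpoly_transpose (A : Matrix (Fin (d+1)) (Fin (d+1)) K) :
    Aᵀ.charpoly = A.charpoly := by
  rw [Matrix.charpoly, Matrix.charpoly, ← Matrix.det_transpose (charmatrix A)]
  congr 1
  refine Matrix.ext fun i j => ?_
  by_cases h : i = j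
  · subst h; simp [charmatrix_apply_eq]
  · simp [charmatrix_apply_ne _ _ _ h, charmatrix_apply_ne _ _ _ (Ne.symm h)]

lemma aeval_transpose (A : Matrix (Fin (d+1)) (Fin (d+1)) K) (p : K[X]) :
    aeval Aᵀ p = (aeval A p)ᵀ := by
  induction p using Polynomial.induction_on' with
  | add p q hp hq => simp [hp, hq]
  | monomial n a =>
    simp [Polynomial.aeval_monomial, Algebra.algebraMap_eq_smul_one,
      Matrix.transpose_pow, smul_mul_assoc, Matrix.transpose_smul]

lemma primIdem_transpose (A : Matrix (Fin (d+1)) (Fin (d+1)) K) (θ : Fin (d+1) → K)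
    (i : Fin (d+1)) : primIdem Aᵀ θ i = (primIdem A θ i)ᵀ :=
  aeval_transpose A _

end Chunk1

section Chunk2
variable {d : ℕ}

lemma primIdem_poly_mul (θ : Fin (d+1) → K) (k : Fin (d+1)) :
    (∏ j ∈ Finset.univ.erase k, (C (θ k - θ j)⁻¹ * (X - C (θ j)))) * (X - C (θ k)) =
      C (∏ j ∈ Finset.univ.erase k, (θ k - θ j)⁻¹) * ∏ i, (X - C (θ i)) := by
  rw [Finset.prod_mul_distrib, ← map_prod, mul_assoc, Finset.prod_erase_mul]
  exact Finset.mem_univ k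

lemma primIdem_eigen {A : Matrix (Fin (d+1)) (Fin (d+1)) K} {θ : Fin (d+1) → K}
    (hc : A.charpoly = ∏ i, (X - C (θ i))) (k : Fin (d+1)) :
    primIdem A θ k * A = θ k • primIdem A θ k ∧
    A * primIdem A θ k = θ k • primIdem A θ k := by
  have hXC : aeval A (X - C (θ k)) = A - θ k • 1 := by
    simp [Algebra.algebraMap_eq_smul_one]
  have key : aeval A ((∏ j ∈ Finset.univ.erase k,
      (C (θ k - θ j)⁻¹ * (X - C (θ j)))) * (X - C (θ k))) = 0 := by
    rw [primIdem_poly_mul θ k, _root_.map_mul, ← hc, Matrix.aeval_self_charpoly, mul_zero]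
  constructor
  · have h0 : primIdem A θ k * (A - θ k • 1) = 0 := by
      rw [primIdem, ← hXC, ← _root_.map_mul]; exact key
    rw [mul_sub, sub_eq_zero] at h0
    rw [h0, mul_smul_comm, mul_one]
  · have h0 : (A - θ k • 1) * primIdem A θ k = 0 := by
      rw [primIdem, ← hXC, ← _root_.map_mul, mul_comm]; exact key
    rw [sub_mul, sub_eq_zero] at h0
    rw [h0, smul_mul_assoc, one_mul]

variable {A : Matrix (Fin (d+1)) (Fin (d+1)) K}

lemma row_sum_bidiag (hA : LowerBidiagonal A) (v : Fin (d+1) → K) (r : Fin (d+1)) :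
    ∑ q, A r q * v q =
      (if h : 0 < (r:ℕ) then A r ⟨(r:ℕ)-1, by omega⟩ * v ⟨(r:ℕ)-1, by omega⟩ else 0)
        + A r r * v r := by
  by_cases h : 0 < (r:ℕ)
  · rw [dif_pos h]
    set r' : Fin (d+1) := ⟨(r:ℕ)-1, by omega⟩ with hr'
    have hne : r' ≠ r := by
      intro he
      have := congrArg (Fin.val) he
      simp only [hr'] at this; omega
    rw [← Finset.sum_subset (Finset.subset_univ ({r', r} : Finset (Fin (d+1))))
      (fun q _ hq => ?_), Finset.sum_pair hne]
    simp only [Finset.mem_insert, Finset.mem_singleton, not_or] at hq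
    have h1 : (r:ℕ) ≠ (q:ℕ) := fun he => hq.2 (Fin.ext he.symm)
    have h2 : (r:ℕ) ≠ (q:ℕ) + 1 := by
      intro he
      exact hq.1 (Fin.ext (by simp only [hr']; omega)).symm
    rw [hA r q h1 h2, zero_mul]
  · rw [dif_neg h]
    rw [Finset.sum_eq_single r (fun q _ hq => ?_) (by simp), zero_add]
    have h1 : (r:ℕ) ≠ (q:ℕ) := fun he => hq (Fin.ext he.symm)
    rw [hA r q h1 (by omega), zero_mul]

lemma col_sum_bidiag (hA : LowerBidiagonal A) (w : Fin (d+1) → K) (s : Fin (d+1)) :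
    ∑ p, w p * A p s =
      w s * A s s +
      (if h : (s:ℕ) < d then w ⟨(s:ℕ)+1, by omega⟩ * A ⟨(s:ℕ)+1, by omega⟩ s else 0) := by
  by_cases h : (s:ℕ) < d
  · rw [dif_pos h]
    set s' : Fin (d+1) := ⟨(s:ℕ)+1, by omega⟩ with hs'
    have hne : s ≠ s' := by
      intro he
      have := congrArg (Fin.val) he
      simp only [hs'] at this; omega
    rw [← Finset.sum_subset (Finset.subset_univ ({s, s'} : Finset (Fin (d+1))))
      (fun p _ hp => ?_), Finset.sum_pair hne]
    simp only [Finset.mem_insert, Finset.mem_singleton, not_or] at hp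
    have h1 : (p:ℕ) ≠ (s:ℕ) := fun he => hp.1 (Fin.ext he)
    have h2 : (p:ℕ) ≠ (s:ℕ) + 1 := fun he => hp.2 (Fin.ext (by simp only [hs']; omega))
    rw [hA p s h1 h2, mul_zero]
  · rw [dif_neg h]
    rw [Finset.sum_eq_single s (fun p _ hp => ?_) (by simp), add_zero]
    have h1 : (p:ℕ) ≠ (s:ℕ) := fun he => hp (Fin.ext he)
    have h2 : (p:ℕ) ≠ (s:ℕ) + 1 := by omega
    rw [hA p s h1 h2, mul_zero]

/-- right eigenvectors vanish strictly below the eigenvalue's index -/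
lemma right_support (hA : LowerBidiagonal A) {v : Fin (d+1) → K} {c : K}
    (hv : ∀ r, ∑ q, A r q * v q = c * v r) (t : ℕ)
    (hne : ∀ r : Fin (d+1), (r:ℕ) < t → A r r ≠ c) :
    ∀ r : Fin (d+1), (r:ℕ) < t → v r = 0 := by
  suffices h : ∀ n : ℕ, ∀ r : Fin (d+1), (r:ℕ) ≤ n → (r:ℕ) < t → v r = 0 by
    intro r hr; exact h (r:ℕ) r le_rfl hr
  intro n
  induction n with
  | zero =>
    intro r hr0 hrt
    have h0 : ¬ 0 < (r:ℕ) := by omega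
    have := hv r
    rw [row_sum_bidiag hA v r, dif_neg h0, zero_add] at this
    have hsub : (A r r - c) * v r = 0 := by rw [sub_mul, this]; ring
    rcases mul_eq_zero.mp hsub with h | h
    · exact absurd (sub_eq_zero.mp h) (hne r hrt)
    · exact h
  | succ n ih =>
    intro r hr0 hrt
    by_cases hc' : (r:ℕ) ≤ n
    · exact ih r hc' hrt
    · have hrn : (r:ℕ) = n + 1 := by omega
      have h0 : 0 < (r:ℕ) := by omega
      have := hv r
      rw [row_sum_bidiag hA v r, dif_pos h0] at this
      have hv' : v ⟨(r:ℕ)-1, by omega⟩ = 0 := ih _ (by simp; omega) (by simp; omega)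
      rw [hv', mul_zero, zero_add] at this
      have hsub : (A r r - c) * v r = 0 := by rw [sub_mul, this]; ring
      rcases mul_eq_zero.mp hsub with h | h
      · exact absurd (sub_eq_zero.mp h) (hne r hrt)
      · exact h

/-- with a zero subdiagonal entry at row i, right eigenvectors for eigenvalues
with index below the gap vanish at and above the gap -/
lemma right_support_gap (hA : LowerBidiagonal A) {v : Fin (d+1) → K} {c : K}
    (hv : ∀ r, ∑ q, A r q * v q = c * v r) {i : ℕ} (h1 : 1 ≤ i) (hid : i ≤ d)
    (hgap : A ⟨i, Nat.lt_succ_of_le hid⟩ ⟨i-1, Nat.lt_succ_of_le (le_trans (Nat.sub_le i 1) hid)⟩ = 0)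
    (hne : ∀ r : Fin (d+1), i ≤ (r:ℕ) → A r r ≠ c) :
    ∀ r : Fin (d+1), i ≤ (r:ℕ) → v r = 0 := by
  suffices h : ∀ n : ℕ, ∀ r : Fin (d+1), (r:ℕ) ≤ i + n → i ≤ (r:ℕ) → v r = 0 by
    intro r hr; exact h (r:ℕ) r (by omega) hr
  intro n
  induction n with
  | zero =>
    intro r hr0 hrt
    obtain ⟨rv, hrlt⟩ := r
    simp only [] at hr0 hrt
    have hri : rv = i := by omega
    subst hri
    have h0 : 0 < rv := h1
    have := hv ⟨rv, hrlt⟩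
    rw [row_sum_bidiag hA v ⟨rv, hrlt⟩, dif_pos h0] at this
    simp only at this
    rw [hgap, zero_mul, zero_add] at this
    have hsub : (A ⟨rv, hrlt⟩ ⟨rv, hrlt⟩ - c) * v ⟨rv, hrlt⟩ = 0 := by
      rw [sub_mul, this]; ring
    rcases mul_eq_zero.mp hsub with h | h
    · exact absurd (sub_eq_zero.mp h) (hne _ (by simp))
    · exact h
  | succ n ih =>
    intro r hr0 hrt
    by_cases hc' : (r:ℕ) ≤ i + n
    · exact ih r hc' hrt
    · have h0 : 0 < (r:ℕ) := by omega
      have := hv r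
      rw [row_sum_bidiag hA v r, dif_pos h0] at this
      have hv' : v ⟨(r:ℕ)-1, by omega⟩ = 0 := ih _ (by simp; omega) (by simp; omega)
      rw [hv', mul_zero, zero_add] at this
      have hsub : (A r r - c) * v r = 0 := by rw [sub_mul, this]; ring
      rcases mul_eq_zero.mp hsub with h | h
      · exact absurd (sub_eq_zero.mp h) (hne r (by omega))
      · exact h

/-- left eigenvectors vanish strictly above the eigenvalue's index -/
lemma left_support (hA : LowerBidiagonal A) {w : Fin (d+1) → K} {c : K}
    (hw : ∀ s, ∑ p, w p * A p s = c * w s) (t : ℕ)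
    (hne : ∀ s : Fin (d+1), t ≤ (s:ℕ) → A s s ≠ c) :
    ∀ s : Fin (d+1), t ≤ (s:ℕ) → w s = 0 := by
  suffices h : ∀ n : ℕ, ∀ s : Fin (d+1), d - n ≤ (s:ℕ) → t ≤ (s:ℕ) → w s = 0 by
    intro s hs; exact h d s (by omega) hs
  intro n
  induction n with
  | zero =>
    intro s hs0 hst
    have hsd : ¬ (s:ℕ) < d := by omega
    have := hw s
    rw [col_sum_bidiag hA w s, dif_neg hsd, add_zero] at this
    have hsub : (A s s - c) * w s = 0 := by
      rw [sub_mul, mul_comm (A s s) (w s)] at *; rw [this]; ring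
    rcases mul_eq_zero.mp hsub with h | h
    · exact absurd (sub_eq_zero.mp h) (hne s hst)
    · exact h
  | succ n ih =>
    intro s hs0 hst
    by_cases hc' : d - n ≤ (s:ℕ)
    · exact ih s hc' hst
    · have hsd : (s:ℕ) < d := by omega
      have := hw s
      rw [col_sum_bidiag hA w s, dif_pos hsd] at this
      have hw' : w ⟨(s:ℕ)+1, by omega⟩ = 0 := ih _ (by simp; omega) (by simp; omega)
      rw [hw', zero_mul, add_zero] at this
      have hsub : (A s s - c) * w s = 0 := by
        rw [sub_mul, mul_comm (A s s) (w s)] at *; rw [this]; ring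
      rcases mul_eq_zero.mp hsub with h | h
      · exact absurd (sub_eq_zero.mp h) (hne s hst)
      · exact h

/-- with a zero subdiagonal entry at row i, left eigenvectors for eigenvalues
with index at or above the gap vanish strictly below the gap -/
lemma left_support_gap (hA : LowerBidiagonal A) {w : Fin (d+1) → K} {c : K}
    (hw : ∀ s, ∑ p, w p * A p s = c * w s) {i : ℕ} (h1 : 1 ≤ i) (hid : i ≤ d)
    (hgap : A ⟨i, Nat.lt_succ_of_le hid⟩ ⟨i-1, Nat.lt_succ_of_le (le_trans (Nat.sub_le i 1) hid)⟩ = 0)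
    (hne : ∀ s : Fin (d+1), (s:ℕ) < i → A s s ≠ c) :
    ∀ s : Fin (d+1), (s:ℕ) < i → w s = 0 := by
  suffices h : ∀ n : ℕ, ∀ s : Fin (d+1), i - 1 - n ≤ (s:ℕ) → (s:ℕ) < i → w s = 0 by
    intro s hs; exact h i s (by omega) hs
  intro n
  induction n with
  | zero =>
    intro s hs0 hst
    obtain ⟨sv, hslt⟩ := s
    simp only [] at hs0 hst
    have hsi : sv = i - 1 := by omega
    subst hsi
    have hsd : (i - 1 : ℕ) < d := by omega
    have key := hw ⟨i-1, hslt⟩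
    rw [col_sum_bidiag hA w ⟨i-1, hslt⟩, dif_pos hsd] at key
    simp only [Fin.val_mk] at key
    have he1 : (⟨i-1+1, by omega⟩ : Fin (d+1)) = ⟨i, by omega⟩ := Fin.ext (by simp; omega)
    rw [he1, hgap, mul_zero, add_zero] at key
    have hsub : (A ⟨i-1, hslt⟩ ⟨i-1, hslt⟩ - c) * w ⟨i-1, hslt⟩ = 0 := by
      rw [sub_mul, mul_comm (A _ _) (w _)] at *; rw [key]; ring
    rcases mul_eq_zero.mp hsub with h | h
    · exact absurd (sub_eq_zero.mp h) (hne _ (by simp; omega))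
    · exact h
  | succ n ih =>
    intro s hs0 hst
    by_cases hc' : i - 1 - n ≤ (s:ℕ)
    · exact ih s hc' hst
    · have hsd : (s:ℕ) < d := by omega
      have := hw s
      rw [col_sum_bidiag hA w s, dif_pos hsd] at this
      have hw' : w ⟨(s:ℕ)+1, by omega⟩ = 0 := ih _ (by simp; omega) (by simp; omega)
      rw [hw', zero_mul, add_zero] at this
      have hsub : (A s s - c) * w s = 0 := by
        rw [sub_mul, mul_comm (A s s) (w s)] at *; rw [this]; ring
      rcases mul_eq_zero.mp hsub with h | h
      · exact absurd (sub_eq_zero.mp h) (hne s hst)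
      · exact h

end Chunk2

section Chunk3
variable {d : ℕ} {A B : Matrix (Fin (d+1)) (Fin (d+1)) K}

lemma primIdem_row_eq (hc : A.charpoly = ∏ i, (X - C (A i i))) (k r : Fin (d+1)) :
    ∀ s, ∑ p, primIdem A (fun m => A m m) k r p * A p s
      = A k k * primIdem A (fun m => A m m) k r s := by
  intro s
  have h := congrFun (congrFun ((primIdem_eigen hc k).1) r) s
  rw [Matrix.mul_apply] at h
  rw [h, Matrix.smul_apply, smul_eq_mul]

lemma primIdem_col_eq (hc : A.charpoly = ∏ i, (X - C (A i i))) (k s : Fin (d+1)) :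
    ∀ r, ∑ q, A r q * primIdem A (fun m => A m m) k q s
      = A k k * primIdem A (fun m => A m m) k r s := by
  intro r
  have h := congrFun (congrFun ((primIdem_eigen hc k).2) r) s
  rw [Matrix.mul_apply] at h
  rw [h, Matrix.smul_apply, smul_eq_mul]

lemma primIdem_col_zero (hA : LowerBidiagonal A)
    (hinj : Function.Injective (fun m => A m m))
    (hc : A.charpoly = ∏ i, (X - C (A i i))) (k : Fin (d+1)) :
    ∀ r s : Fin (d+1), (k:ℕ) < (s:ℕ) → primIdem A (fun m => A m m) k r s = 0 := by
  intro r s hs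
  refine left_support hA (primIdem_row_eq hc k r) ((k:ℕ)+1) (fun u hu => ?_) s (by omega)
  exact fun he => absurd (congrArg Fin.val (hinj he)) (by omega)

lemma primIdem_row_zero (hA : LowerBidiagonal A)
    (hinj : Function.Injective (fun m => A m m))
    (hc : A.charpoly = ∏ i, (X - C (A i i))) (k : Fin (d+1)) :
    ∀ r s : Fin (d+1), (r:ℕ) < (k:ℕ) → primIdem A (fun m => A m m) k r s = 0 := by
  intro r s hr
  refine right_support hA (fun u => primIdem_col_eq hc k s u) (k:ℕ) (fun u hu => ?_) r hr
  exact fun he => absurd (congrArg Fin.val (hinj he)) (by omega)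

lemma primIdem_gap_col_zero (hA : LowerBidiagonal A)
    (hinj : Function.Injective (fun m => A m m))
    (hc : A.charpoly = ∏ i, (X - C (A i i))) {i : ℕ} (h1 : 1 ≤ i) (hid : i ≤ d)
    (hgap : A ⟨i, Nat.lt_succ_of_le hid⟩ ⟨i-1, Nat.lt_succ_of_le (le_trans (Nat.sub_le i 1) hid)⟩ = 0) (k : Fin (d+1)) (hk : i ≤ (k:ℕ)) :
    ∀ r s : Fin (d+1), (s:ℕ) < i → primIdem A (fun m => A m m) k r s = 0 := by
  intro r s hs
  refine left_support_gap hA (primIdem_row_eq hc k r) h1 hid hgap (fun u hu => ?_) s hs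
  exact fun he => absurd (congrArg Fin.val (hinj he)) (by omega)

lemma primIdem_gap_row_zero (hA : LowerBidiagonal A)
    (hinj : Function.Injective (fun m => A m m))
    (hc : A.charpoly = ∏ i, (X - C (A i i))) {i : ℕ} (h1 : 1 ≤ i) (hid : i ≤ d)
    (hgap : A ⟨i, Nat.lt_succ_of_le hid⟩ ⟨i-1, Nat.lt_succ_of_le (le_trans (Nat.sub_le i 1) hid)⟩ = 0) (k : Fin (d+1)) (hk : (k:ℕ) < i) :
    ∀ r s : Fin (d+1), i ≤ (r:ℕ) → primIdem A (fun m => A m m) k r s = 0 := by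
  intro r s hr
  refine right_support_gap hA (fun u => primIdem_col_eq hc k s u) h1 hid hgap
    (fun u hu => ?_) r hr
  exact fun he => absurd (congrArg Fin.val (hinj he)) (by omega)

lemma struct_zero (hA : LowerBidiagonal A) (hB : UpperBidiagonal B)
    (hinj : Function.Injective (fun m => A m m))
    (hc : A.charpoly = ∏ i, (X - C (A i i))) (k l : Fin (d+1)) (hkl : (k:ℕ)+1 < (l:ℕ)) :
    primIdem A (fun m => A m m) k * B * primIdem A (fun m => A m m) l = 0 := by
  refine Matrix.ext fun r s => ?_
  rw [Matrix.zero_apply, Matrix.mul_apply]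
  refine Finset.sum_eq_zero fun q _ => ?_
  by_cases hq : (q:ℕ) < (l:ℕ)
  · rw [primIdem_row_zero hA hinj hc l q s hq, mul_zero]
  · rw [Matrix.mul_apply, Finset.sum_eq_zero fun p _ => ?_, zero_mul]
    by_cases hp : (k:ℕ) < (p:ℕ)
    · rw [primIdem_col_zero hA hinj hc k r p hp, zero_mul]
    · rw [hB p q (by omega) (by omega), mul_zero]

lemma gap_zero (hA : LowerBidiagonal A) (hB : UpperBidiagonal B)
    (hinj : Function.Injective (fun m => A m m))
    (hc : A.charpoly = ∏ i, (X - C (A i i))) {i : ℕ} (h1 : 1 ≤ i) (hid : i ≤ d)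
    (hgap : A ⟨i, Nat.lt_succ_of_le hid⟩ ⟨i-1, Nat.lt_succ_of_le (le_trans (Nat.sub_le i 1) hid)⟩ = 0) :
    primIdem A (fun m => A m m) ⟨i, Nat.lt_succ_of_le hid⟩ * B *
      primIdem A (fun m => A m m) ⟨i-1, Nat.lt_succ_of_le (le_trans (Nat.sub_le i 1) hid)⟩ = 0 := by
  refine Matrix.ext fun r s => ?_
  rw [Matrix.zero_apply, Matrix.mul_apply]
  refine Finset.sum_eq_zero fun q _ => ?_
  by_cases hq : i ≤ (q:ℕ)
  · rw [primIdem_gap_row_zero hA hinj hc h1 hid hgap ⟨i-1, by omega⟩ (by simp; omega)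
      q s hq, mul_zero]
  · rw [Matrix.mul_apply, Finset.sum_eq_zero fun p _ => ?_, zero_mul]
    by_cases hp : (p:ℕ) < i
    · rw [primIdem_gap_col_zero hA hinj hc h1 hid hgap ⟨i, by omega⟩ (by simp)
        r p hp, zero_mul]
    · rw [hB p q (by omega) (by omega), mul_zero]

lemma super_zero (hA : LowerBidiagonal A) (hB : UpperBidiagonal B)
    (hinj : Function.Injective (fun m => A m m))
    (hc : A.charpoly = ∏ i, (X - C (A i i))) {i : ℕ} (h1 : 1 ≤ i) (hid : i ≤ d)
    (hBgap : B ⟨i-1, Nat.lt_succ_of_le (le_trans (Nat.sub_le i 1) hid)⟩ ⟨i, Nat.lt_succ_of_le hid⟩ = 0) :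
    primIdem A (fun m => A m m) ⟨i-1, Nat.lt_succ_of_le (le_trans (Nat.sub_le i 1) hid)⟩ * B *
      primIdem A (fun m => A m m) ⟨i, Nat.lt_succ_of_le hid⟩ = 0 := by
  refine Matrix.ext fun r s => ?_
  rw [Matrix.zero_apply, Matrix.mul_apply]
  refine Finset.sum_eq_zero fun q _ => ?_
  by_cases hq : (q:ℕ) < i
  · rw [primIdem_row_zero hA hinj hc ⟨i, by omega⟩ q s (by simpa using hq), mul_zero]
  · rw [Matrix.mul_apply, Finset.sum_eq_zero fun p _ => ?_, zero_mul]
    by_cases hp : (i:ℕ) - 1 < (p:ℕ)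
    · rw [primIdem_col_zero hA hinj hc ⟨i-1, by omega⟩ r p (by simpa using hp), zero_mul]
    · by_cases hpq : (q:ℕ) = (p:ℕ) + 1
      · have hp' : p = ⟨i-1, Nat.lt_succ_of_le (le_trans (Nat.sub_le i 1) hid)⟩ :=
          Fin.ext (by simp; omega)
        have hq' : q = ⟨i, Nat.lt_succ_of_le hid⟩ := Fin.ext (by simp; omega)
        rw [hp', hq', hBgap, mul_zero]
      · rw [hB p q (by omega) (by omega), mul_zero]

end Chunk3

section Chunk4

lemma perm_rigid {d : ℕ} (σ : Fin (d+1) → Fin (d+1)) (hbij : Function.Bijective σ)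
    (hP : ∀ k l : Fin (d+1), |((σ k : ℕ):ℤ) - ((σ l : ℕ):ℤ)| = 1 →
      |((k:ℕ):ℤ) - ((l:ℕ):ℤ)| = 1) :
    ∀ k l : Fin (d+1), |((σ k : ℕ):ℤ) - ((σ l : ℕ):ℤ)| = |((k:ℕ):ℤ) - ((l:ℕ):ℤ)| := by
  obtain ⟨g, hge, hgσ⟩ : ∃ g : Fin (d+1) → Fin (d+1),
      (∀ p, σ (g p) = p) ∧ (∀ p, g (σ p) = p) := by
    choose g hgspec using hbij.2
    exact ⟨g, hgspec, fun p => hbij.1 (hgspec (σ p))⟩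
  have ginj : Function.Injective g := fun p q h => by
    rw [← hge p, ← hge q, h]
  have hg : ∀ p q : Fin (d+1), |((p:ℕ):ℤ) - ((q:ℕ):ℤ)| = 1 →
      |((g p : ℕ):ℤ) - ((g q : ℕ):ℤ)| = 1 := by
    intro p q h
    have := hP (g p) (g q)
    rw [hge p, hge q] at this
    exact this h
  have hdich : (∀ p : Fin (d+1), ((g p : ℕ)) = (p:ℕ)) ∨
      (∀ p : Fin (d+1), ((g p : ℕ)) = d - (p:ℕ)) := by
    by_cases hd : d = 0
    · subst hd
      left
      intro p
      have h1 := (g p).is_le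
      have h2 := p.is_le
      omega
    · have hstep : ∀ p : ℕ, ∀ _hp : p < d,
          ((g ⟨p+1, Nat.succ_lt_succ _hp⟩ : ℕ)
              = (g ⟨p, Nat.lt_succ_of_le (Nat.le_of_lt _hp)⟩ : ℕ) + 1 ∨
           (g ⟨p, Nat.lt_succ_of_le (Nat.le_of_lt _hp)⟩ : ℕ)
              = (g ⟨p+1, Nat.succ_lt_succ _hp⟩ : ℕ) + 1) := by
        intro p hp
        have habs := hg ⟨p+1, Nat.succ_lt_succ hp⟩ ⟨p, Nat.lt_succ_of_le (Nat.le_of_lt hp)⟩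
          (by simp)
        rcases (abs_eq (by norm_num : (0:ℤ) ≤ 1)).mp habs with h | h <;> omega
      have hcast : ∀ (m1 m2 : ℕ) (hm1 : m1 < d+1) (hm2 : m2 < d+1), m1 = m2 →
          (g ⟨m1, hm1⟩ : ℕ) = (g ⟨m2, hm2⟩ : ℕ) := by
        intro m1 m2 hm1 hm2 h
        subst h
        rfl
      rcases hstep 0 (by omega) with h01'' | h01''
      · -- increasing case
        have h01 : (g ⟨1, Nat.succ_lt_succ (Nat.pos_of_ne_zero hd)⟩ : ℕ)
            = (g ⟨0, Nat.succ_pos d⟩ : ℕ) + 1 := by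
          have hfix := hcast (0+1) 1 (by omega) (by omega) rfl
          omega
        have claim : ∀ p : ℕ, ∀ _hp : p ≤ d,
            (g ⟨p, Nat.lt_succ_of_le _hp⟩ : ℕ) = (g ⟨0, Nat.succ_pos d⟩ : ℕ) + p := by
          intro p
          induction p using Nat.strong_induction_on with
          | _ p ih =>
            intro hp
            by_cases h0 : p = 0
            · subst h0; simp
            · by_cases h1' : p = 1
              · subst h1'; omega
              · obtain ⟨n, rfl⟩ : ∃ n, p = n + 2 := ⟨p - 2, by omega⟩
                have e1 := ih (n+1) (by omega) (by omega)
                have e0 := ih n (by omega) (by omega)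
                have hfix := hcast (n+1+1) (n+2) (by omega) (by omega) rfl
                rcases hstep (n+1) (by omega) with hs | hs
                · omega
                · exfalso
                  have hvv : (g ⟨n+2, by omega⟩ : ℕ) = (g ⟨n, by omega⟩ : ℕ) := by omega
                  have heq := ginj (Fin.ext hvv)
                  rw [Fin.mk.injEq] at heq
                  omega
        have hg0 : (g ⟨0, Nat.succ_pos d⟩ : ℕ) = 0 := by
          have := claim d (le_refl d)
          have := (g ⟨d, Nat.lt_succ_of_le (le_refl d)⟩).is_le
          omega
        left
        intro p
        have := claim (p:ℕ) p.is_le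
        have hpe : (⟨(p:ℕ), Nat.lt_succ_of_le p.is_le⟩ : Fin (d+1)) = p := Fin.ext rfl
        rw [hpe] at this
        omega
      · -- decreasing case
        have h01 : (g ⟨0, Nat.succ_pos d⟩ : ℕ)
            = (g ⟨1, Nat.succ_lt_succ (Nat.pos_of_ne_zero hd)⟩ : ℕ) + 1 := by
          have hfix := hcast (0+1) 1 (by omega) (by omega) rfl
          omega
        have claim : ∀ p : ℕ, ∀ _hp : p ≤ d,
            (g ⟨p, Nat.lt_succ_of_le _hp⟩ : ℕ) + p = (g ⟨0, Nat.succ_pos d⟩ : ℕ) := by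
          intro p
          induction p using Nat.strong_induction_on with
          | _ p ih =>
            intro hp
            by_cases h0 : p = 0
            · subst h0; simp
            · by_cases h1' : p = 1
              · subst h1'; omega
              · obtain ⟨n, rfl⟩ : ∃ n, p = n + 2 := ⟨p - 2, by omega⟩
                have e1 := ih (n+1) (by omega) (by omega)
                have e0 := ih n (by omega) (by omega)
                have hfix := hcast (n+1+1) (n+2) (by omega) (by omega) rfl
                rcases hstep (n+1) (by omega) with hs | hs
                · exfalso
                  have hvv : (g ⟨n+2, by omega⟩ : ℕ) = (g ⟨n, by omega⟩ : ℕ) := by omega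
                  have heq := ginj (Fin.ext hvv)
                  rw [Fin.mk.injEq] at heq
                  omega
                · omega
        have hg0 : (g ⟨0, Nat.succ_pos d⟩ : ℕ) = d := by
          have h1 := claim d (le_refl d)
          have h2 := (g ⟨0, Nat.succ_pos d⟩).is_le
          omega
        right
        intro p
        have := claim (p:ℕ) p.is_le
        have hpe : (⟨(p:ℕ), Nat.lt_succ_of_le p.is_le⟩ : Fin (d+1)) = p := Fin.ext rfl
        rw [hpe] at this
        omega
  -- translate to σ
  have hσval : (∀ k : Fin (d+1), ((σ k : ℕ)) = (k:ℕ)) ∨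
      (∀ k : Fin (d+1), ((σ k : ℕ)) = d - (k:ℕ)) := by
    rcases hdich with h | h
    · left
      intro k
      have : g k = k := Fin.ext (h k)
      conv_lhs => rw [← this, hge k]
    · right
      intro k
      have hk : k.val ≤ d := k.is_le
      have h1 : g ⟨d - (k:ℕ), by omega⟩ = k := Fin.ext (by simp [h]; omega)
      have h2 : σ k = ⟨d - (k:ℕ), by omega⟩ := by conv_lhs => rw [← h1, hge]
      rw [h2]
  rcases hσval with h | h
  · intro k l
    rw [h k, h l]
  · intro k l
    rw [h k, h l]
    have hk := k.is_le
    have hl := l.is_le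
    rw [Nat.cast_sub hk, Nat.cast_sub hl,
      show ((d:ℤ) - (k:ℕ)) - ((d:ℤ) - (l:ℕ)) = -(((k:ℕ):ℤ) - ((l:ℕ):ℤ)) by ring, abs_neg]

end Chunk4

section Chunk5
variable {d : ℕ}

lemma main_seq {A B : Matrix (Fin (d+1)) (Fin (d+1)) K} {θ : Fin (d+1) → K}
    (hA : LowerBidiagonal A) (hB : UpperBidiagonal B)
    (hθ : IsEigenvalueSeq A B θ) : IsEigenvalueSeq A B (fun k => A k k) := by
  obtain ⟨⟨hinjθ, hcθ⟩, hcond⟩ := hθ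
  have hchar : A.charpoly = ∏ i, (X - C (A i i)) := charpoly_lowerBidiagonal hA
  have hprod : (∏ i, (X - C (A i i)) : K[X]) = ∏ i, (X - C (θ i)) := by rw [← hchar, hcθ]
  have hms : Finset.univ.val.map (fun k : Fin (d+1) => A k k) = Finset.univ.val.map θ := by
    have h1 : ((Finset.univ.val.map (fun k : Fin (d+1) => A k k)).map
        (fun r : K => X - C r)).prod
        = ((Finset.univ.val.map θ).map (fun r : K => X - C r)).prod := by
      rw [Multiset.map_map, Multiset.map_map]
      rw [← Finset.prod_eq_multiset_prod, ← Finset.prod_eq_multiset_prod]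
      exact hprod
    have h2 := congrArg Polynomial.roots h1
    rwa [Polynomial.roots_multiset_prod_X_sub_C, Polynomial.roots_multiset_prod_X_sub_C] at h2
  have hnodupθ : (Finset.univ.val.map θ).Nodup :=
    Multiset.Nodup.map hinjθ Finset.univ.nodup
  have hnodupa : (Finset.univ.val.map (fun k : Fin (d+1) => A k k)).Nodup := by
    rw [hms]; exact hnodupθ
  have hinja : Function.Injective (fun k : Fin (d+1) => A k k) := by
    intro k l h
    exact (Multiset.nodup_map_iff_inj_on Finset.univ.nodup).mp hnodupa k (by simp)
      l (by simp) h
  have hex : ∀ k : Fin (d+1), ∃ m, θ m = A k k := by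
    intro k
    have hk : A k k ∈ Finset.univ.val.map θ := by
      rw [← hms]
      exact Multiset.mem_map_of_mem _ (by simp)
    obtain ⟨m, _, hm⟩ := Multiset.mem_map.mp hk
    exact ⟨m, hm⟩
  choose σ hσ using hex
  have hσinj : Function.Injective σ := by
    intro k l h
    apply hinja
    show A k k = A l l
    rw [← hσ k, ← hσ l, h]
  have hσbij : Function.Bijective σ := ⟨hσinj, Finite.injective_iff_surjective.mp hσinj⟩
  have hE : ∀ k, primIdem A (fun m => A m m) k = primIdem A θ (σ k) := by
    intro k
    unfold primIdem
    congr 1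
    refine Finset.prod_bij (fun j _ => σ j) ?_ ?_ ?_ ?_
    · intro j hj
      rw [Finset.mem_erase] at hj ⊢
      exact ⟨fun he => hj.1 (hσinj he), Finset.mem_univ _⟩
    · intro j1 h1 j2 h2 h
      exact hσinj h
    · intro m hm
      rw [Finset.mem_erase] at hm
      obtain ⟨j, hj⟩ := hσbij.2 m
      exact ⟨j, Finset.mem_erase.mpr ⟨fun he => hm.1 (by rw [← hj, he]), Finset.mem_univ _⟩, hj⟩
    · intro j hj
      rw [hσ k, hσ j]
  have hP : ∀ k l : Fin (d+1), |((σ k : ℕ):ℤ) - ((σ l : ℕ):ℤ)| = 1 →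
      |((k:ℕ):ℤ) - ((l:ℕ):ℤ)| = 1 := by
    intro k l habs
    have hne := (hcond (σ k) (σ l)).2 habs
    rw [← hE k, ← hE l] at hne
    have h1 : ¬ ((k:ℕ)+1 < (l:ℕ)) := fun h => hne (struct_zero hA hB hinja hchar k l h)
    have hne' := (hcond (σ l) (σ k)).2 (by rw [abs_sub_comm]; exact habs)
    rw [← hE l, ← hE k] at hne'
    have h2 : ¬ ((l:ℕ)+1 < (k:ℕ)) := fun h => hne' (struct_zero hA hB hinja hchar l k h)
    have h3 : k ≠ l := by
      rintro rfl
      simp at habs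
    have h4 : (k:ℕ) ≠ (l:ℕ) := fun h => h3 (Fin.ext h)
    rw [abs_eq (by norm_num : (0:ℤ) ≤ 1)]
    omega
  have habs := perm_rigid σ hσbij hP
  refine ⟨⟨hinja, hchar⟩, fun i j => ⟨?_, ?_⟩⟩
  · intro h
    rw [hE i, hE j]
    exact (hcond (σ i) (σ j)).1 (by rw [habs i j]; exact h)
  · intro h
    rw [hE i, hE j]
    exact (hcond (σ i) (σ j)).2 (by rw [habs i j]; exact h)

end Chunk5

section Chunk6
variable {d : ℕ}

lemma isEigenvalueSeq_transpose {A B : Matrix (Fin (d+1)) (Fin (d+1)) K} {θ : Fin (d+1) → K}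
    (h : IsEigenvalueSeq A B θ) : IsEigenvalueSeq Aᵀ Bᵀ θ := by
  obtain ⟨⟨hinj, hc⟩, hcond⟩ := h
  have hpi : ∀ k, primIdem Aᵀ θ k = (primIdem A θ k)ᵀ := fun k => primIdem_transpose A θ k
  have key : ∀ i j, primIdem Aᵀ θ i * Bᵀ * primIdem Aᵀ θ j
      = (primIdem A θ j * B * primIdem A θ i)ᵀ := by
    intro i j
    rw [hpi i, hpi j, Matrix.transpose_mul, Matrix.transpose_mul, mul_assoc]
  refine ⟨⟨hinj, by rw [_root_.charpoly_transpose]; exact hc⟩, fun i j => ⟨?_, ?_⟩⟩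
  · intro habs
    rw [key i j, (hcond j i).1 (by rw [abs_sub_comm]; exact habs), Matrix.transpose_zero]
  · intro habs h0
    refine (hcond j i).2 (by rw [abs_sub_comm]; exact habs) ?_
    rw [key i j] at h0
    exact Matrix.transpose_eq_zero.mp h0

lemma subdiag_ne {A B : Matrix (Fin (d+1)) (Fin (d+1)) K}
    (hA : LowerBidiagonal A) (hB : UpperBidiagonal B)
    (hseq : IsEigenvalueSeq A B (fun k => A k k)) {i : ℕ} (h1 : 1 ≤ i) (hid : i ≤ d) :
    A ⟨i, Nat.lt_succ_of_le hid⟩ ⟨i-1, Nat.lt_succ_of_le (le_trans (Nat.sub_le i 1) hid)⟩ ≠ 0 := by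
  intro hgap
  obtain ⟨⟨hinj, hc⟩, hcond⟩ := hseq
  have habs : |(((⟨i, by omega⟩ : Fin (d+1)) : ℕ):ℤ)
      - (((⟨i-1, by omega⟩ : Fin (d+1)) : ℕ):ℤ)| = 1 := by
    simp only [Fin.val_mk]
    rw [abs_eq (by norm_num : (0:ℤ) ≤ 1)]
    omega
  exact (hcond ⟨i, by omega⟩ ⟨i-1, by omega⟩).2 habs (gap_zero hA hB hinj hc h1 hid hgap)

lemma superdiag_ne {A B : Matrix (Fin (d+1)) (Fin (d+1)) K}
    (hA : LowerBidiagonal A) (hB : UpperBidiagonal B)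
    (hseq : IsEigenvalueSeq A B (fun k => A k k)) {i : ℕ} (h1 : 1 ≤ i) (hid : i ≤ d) :
    B ⟨i-1, Nat.lt_succ_of_le (le_trans (Nat.sub_le i 1) hid)⟩ ⟨i, Nat.lt_succ_of_le hid⟩ ≠ 0 := by
  intro hgap
  obtain ⟨⟨hinj, hc⟩, hcond⟩ := hseq
  have habs : |(((⟨i-1, by omega⟩ : Fin (d+1)) : ℕ):ℤ)
      - (((⟨i, by omega⟩ : Fin (d+1)) : ℕ):ℤ)| = 1 := by
    simp only [Fin.val_mk]
    rw [abs_eq (by norm_num : (0:ℤ) ≤ 1)]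
    omega
  exact (hcond ⟨i-1, by omega⟩ ⟨i, by omega⟩).2 habs (super_zero hA hB hinj hc h1 hid hgap)

end Chunk6


theorem leonard_lb_ub_basic_data {d : ℕ}
    (A Astar : Matrix (Fin (d + 1)) (Fin (d + 1)) K)
    (hLP : IsLeonardPair A Astar)
    (hA : LowerBidiagonal A) (hAs : UpperBidiagonal Astar) :
    (∀ i : ℕ, ∀ _ : 1 ≤ i, ∀ _ : i ≤ d, A ⟨i, by omega⟩ ⟨i - 1, by omega⟩ ≠ 0) ∧
    (∀ i : ℕ, ∀ _ : 1 ≤ i, ∀ _ : i ≤ d, Astar ⟨i - 1, by omega⟩ ⟨i, by omega⟩ ≠ 0) ∧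
    IsEigenvalueSeq A Astar (fun k => A k k) ∧
    IsEigenvalueSeq Astar A (fun k => Astar k k) := by
  obtain ⟨⟨θ, hθ⟩, ⟨θs, hθs⟩⟩ := hLP
  have hseqA : IsEigenvalueSeq A Astar (fun k => A k k) := main_seq hA hAs hθ
  have hT : IsEigenvalueSeq Astarᵀ Aᵀ θs := isEigenvalueSeq_transpose hθs
  have hseqT : IsEigenvalueSeq Astarᵀ Aᵀ (fun k => Astarᵀ k k) :=
    main_seq hAs.t hA.t hT
  have hseqAs : IsEigenvalueSeq Astar A (fun k => Astar k k) := by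
    have h2 := isEigenvalueSeq_transpose hseqT
    rw [Matrix.transpose_transpose, Matrix.transpose_transpose] at h2
    exact h2
  refine ⟨?_, ?_, hseqA, hseqAs⟩
  · intro i hi1 hid
    exact subdiag_ne hA hAs hseqA hi1 hid
  · intro i hi1 hid
    exact superdiag_ne hA hAs hseqA hi1 hid
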